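/- arXiv:2502.06680 — 2 statements merged into one kernel-verified Lean document; each statement's English description precedes it below -/
import Mathlib

section
/- Let W be the lazy random walk on a finite simple connected regular graph G = (V,E), started from the uniform stationary distribution π. Fix s ≥ t_mix + 1 and a finite interval A ⊂ ℕ_0 with #A ≥ 2s+1. Then the expected number of (A,s)-locally non-erased indices satisfies (1 − 10s²/#V)·(#A − 2s)/sup_{ρ∈V} H^W_ρ(s) ≤ E_π[# NE^{W,s}(A)] ≤ #A, where H^W_ρ(s) = Σ_{i=0}^{s} Σ_{j=0}^{s} P_ρ(W(i+j) = ρ). -/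
open Finset

variable {V : Type*} [Fintype V] [DecidableEq V] [Nonempty V]

/-- One-step transition kernel of the lazy random walk on `G`:
stay put with probability `1/2`, otherwise move to a uniformly chosen neighbour. -/
noncomputable def lazyStep (G : SimpleGraph V) [DecidableRel G.Adj] (x y : V) : ℝ :=
  if x = y then 1 / 2 else if G.Adj x y then 1 / (2 * (G.degree x : ℝ)) else 0

/-- `n`-step transition probabilities of the lazy random walk. -/
noncomputable def lazyProb (G : SimpleGraph V) [DecidableRel G.Adj] : ℕ → V → V → ℝ
  | 0, x, y => if x = y then 1 else 0
  | n + 1, x, y => ∑ z : V, lazyStep G x z * lazyProb G n z y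

/-- The stationary (degree-biased) distribution `π(x) = deg(x)/(2#E)`. -/
noncomputable def statDist (G : SimpleGraph V) [DecidableRel G.Adj] (x : V) : ℝ :=
  (G.degree x : ℝ) / (2 * (G.edgeFinset.card : ℝ))

/-- The uniform `(ℓ∞, 1/4)` mixing time. -/
noncomputable def tmix (G : SimpleGraph V) [DecidableRel G.Adj] : ℕ :=
  sInf {n : ℕ | ∀ x y : V, |lazyProb G n x y / statDist G y - 1| ≤ 1 / 4}

/-- Extension of a finite path to all of `ℕ` (constant after time `N`). -/
def extPath (N : ℕ) (γ : Fin (N + 1) → V) : ℕ → V :=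
  fun n => γ ⟨min n N, Nat.lt_succ_of_le (min_le_right n N)⟩

/-- Weight of a finite path under the lazy random walk kernel. -/
noncomputable def pathWeight (G : SimpleGraph V) [DecidableRel G.Adj]
    (N : ℕ) (γ : Fin (N + 1) → V) : ℝ :=
  ∏ i ∈ Finset.range N, lazyStep G (extPath N γ i) (extPath N γ (i + 1))

open Classical in
/-- Probability, for the lazy random walk started at `ρ`, of a path event
depending only on the first `N+1` coordinates. -/
noncomputable def walkProb (G : SimpleGraph V) [DecidableRel G.Adj]
    (ρ : V) (N : ℕ) (E : (ℕ → V) → Prop) : ℝ :=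
  ∑ γ : Fin (N + 1) → V,
    if extPath N γ 0 = ρ ∧ E (extPath N γ) then pathWeight G N γ else 0

open Classical in
/-- Expectation, for the lazy random walk started at `ρ`, of a path functional
depending only on the first `N+1` coordinates. -/
noncomputable def walkExp (G : SimpleGraph V) [DecidableRel G.Adj]
    (ρ : V) (N : ℕ) (f : (ℕ → V) → ℝ) : ℝ :=
  ∑ γ : Fin (N + 1) → V,
    if extPath N γ 0 = ρ then pathWeight G N γ * f (extPath N γ) else 0

open Classical in
/-- Probability of a path event for the lazy random walk started from `π`. -/
noncomputable def walkProbStat (G : SimpleGraph V) [DecidableRel G.Adj]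
    (N : ℕ) (E : (ℕ → V) → Prop) : ℝ :=
  ∑ γ : Fin (N + 1) → V,
    if E (extPath N γ) then statDist G (extPath N γ 0) * pathWeight G N γ else 0

/-- Expectation of a path functional for the lazy random walk started from `π`. -/
noncomputable def walkExpStat (G : SimpleGraph V) [DecidableRel G.Adj]
    (N : ℕ) (f : (ℕ → V) → ℝ) : ℝ :=
  ∑ γ : Fin (N + 1) → V,
    statDist G (extPath N γ 0) * pathWeight G N γ * f (extPath N γ)

open Classical in
/-- Probability of a joint event for two independent lazy random walks,
each started from the stationary distribution. -/
noncomputable def twoWalkProbStat (G : SimpleGraph V) [DecidableRel G.Adj]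
    (N : ℕ) (E : (ℕ → V) → (ℕ → V) → Prop) : ℝ :=
  ∑ γ₁ : Fin (N + 1) → V, ∑ γ₂ : Fin (N + 1) → V,
    if E (extPath N γ₁) (extPath N γ₂) then
      (statDist G (extPath N γ₁ 0) * pathWeight G N γ₁) *
      (statDist G (extPath N γ₂ 0) * pathWeight G N γ₂) else 0

open Classical in
/-- Probability of a joint event for two independent lazy random walks,
both started at the vertex `ρ`. -/
noncomputable def twoWalkProbFrom (G : SimpleGraph V) [DecidableRel G.Adj]
    (ρ : V) (N : ℕ) (E : (ℕ → V) → (ℕ → V) → Prop) : ℝ :=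
  ∑ γ₁ : Fin (N + 1) → V, ∑ γ₂ : Fin (N + 1) → V,
    if extPath N γ₁ 0 = ρ ∧ extPath N γ₂ 0 = ρ ∧ E (extPath N γ₁) (extPath N γ₂) then
      pathWeight G N γ₁ * pathWeight G N γ₂ else 0

/-- Range of a path over a finite set of times. -/
def walkRange (w : ℕ → V) (A : Finset ℕ) : Finset V := A.image w

/-- `q̄^G(s)`: averaged intersection probability of two independent lazy walks
started at the same (uniform) vertex. -/
noncomputable def qbar (G : SimpleGraph V) [DecidableRel G.Adj] (s : ℕ) : ℝ :=
  (1 / (Fintype.card V : ℝ)) * ∑ ρ : V,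
    twoWalkProbFrom G ρ s (fun w₁ w₂ =>
      (walkRange w₁ (Finset.Icc 0 s) ∩ walkRange w₂ (Finset.Icc 1 s)).Nonempty)

/-- `H^W_ρ(m) = Σ_{i=0}^m Σ_{j=0}^m P_ρ(W(i+j)=ρ)`. -/
noncomputable def HW (G : SimpleGraph V) [DecidableRel G.Adj] (ρ : V) (m : ℕ) : ℝ :=
  ∑ i ∈ Finset.range (m + 1), ∑ j ∈ Finset.range (m + 1), lazyProb G (i + j) ρ ρ

open Classical in
/-- Non-erased time indices of the chronological loop erasure of a path on the
interval starting at `a`: `NEseg w a k` is `NE^{w,[a,·]}(a+k)`. -/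
noncomputable def NEseg (w : ℕ → V) (a : ℕ) : ℕ → Finset ℕ
  | 0 => {a}
  | k + 1 =>
      (NEseg w a k).filter (fun m =>
        w (a + k + 1) ∉ ((NEseg w a k).filter (fun h => h ≤ m)).image w) ∪ {a + k + 1}

open Classical in
/-- `(A,s)`-locally non-erased time indices for `A = [a,b]`:
indices `m ∈ [a+s, b-s]` such that the range of the locally loop-erased segment
`NE^{w,[m-s,m]}(m)` does not meet the range of `w` on `[m+1,m+s]`. -/
noncomputable def NEloc (w : ℕ → V) (s a b : ℕ) : Finset ℕ :=
  (Finset.Icc (a + s) (b - s)).filter (fun m =>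
    walkRange w (NEseg w (m - s) s) ∩ walkRange w (Finset.Icc (m + 1) (m + s)) = ∅)

/-!
Linearity of expectation and stationarity reduce the lower bound to
`Ψ = P_π(W[0,s] ∩ W[s+1,2s] = ∅)`: when these ranges are disjoint for the walk shifted to start
at `m - s`, the index `m` is locally non-erased, because the loop erasure of `W` on `[m-s, m]`
only keeps times in `[m-s, m]`.

To see `1 - 10s²/n ≤ (sup_ρ H_ρ(s)) Ψ`, look at a walk of length `6s` around time `3s`. Either
some loop `W(3s-i) = W(3s+j)` with `i, j ≤ s` has its `s` steps before and after disjoint, or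
there is a loop `W(3s-i) = W(3s+j)` with `i, j ≤ 2s` and `i + j > s`. By the Markov property and
reversibility, the first event for a fixed `(i, j)` has probability `n⁻¹ Σ_x P^{i+j}(x,x) F(x)`,
where `F(x)` is the probability that two independent walks from `x` do not intersect; summed over
`i, j ≤ s` this is `n⁻¹ Σ_x H_x(s) F(x) ≤ (sup_ρ H_ρ(s)) Ψ`. Since `i + j > s > t_mix`, each of
the at most `8s²` long loops has probability at most `5/(4n)`.
-/

set_option linter.unusedSectionVars false

section Kernel

variable {G : SimpleGraph V} [DecidableRel G.Adj]

lemma SimpleGraph.Connected.degree_pos (hconn : G.Connected) (hcard : 2 ≤ Fintype.card V)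
    (x : V) : 0 < G.degree x :=
  haveI := Fintype.one_lt_card_iff_nontrivial.1 hcard
  hconn.preconnected.degree_pos_of_nontrivial x

lemma SimpleGraph.IsRegularOfDegree.degree_pos {d : ℕ} (hreg : G.IsRegularOfDegree d)
    (hd : 0 < d) (x : V) : 0 < G.degree x :=
  hreg x ▸ hd

lemma SimpleGraph.Connected.pos_of_isRegularOfDegree (hconn : G.Connected)
    (hcard : 2 ≤ Fintype.card V) {d : ℕ} (hreg : G.IsRegularOfDegree d) : 0 < d :=
  hreg (Classical.arbitrary V) ▸ hconn.degree_pos hcard _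

lemma lazyStep_nonneg (x y : V) : 0 ≤ lazyStep G x y := by
  unfold lazyStep; split_ifs <;> positivity

lemma lazyStep_self (x : V) : lazyStep G x x = 1 / 2 := if_pos rfl

lemma lazyStep_pos_of_adj {x y : V} (h : G.Adj x y) : 0 < lazyStep G x y := by
  have : 0 < G.degree x := (G.degree_pos_iff_exists_adj x).2 ⟨y, h⟩
  rw [lazyStep, if_neg h.ne, if_pos h]
  positivity

lemma sum_lazyStep {x : V} (hx : 0 < G.degree x) : ∑ y, lazyStep G x y = 1 := by
  have hsplit : ∀ y, lazyStep G x y =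
      (if x = y then 1 / 2 else 0) + if G.Adj x y then 1 / (2 * (G.degree x : ℝ)) else 0 := by
    intro y
    rcases eq_or_ne x y with rfl | h
    · simp [lazyStep]
    · simp [lazyStep, h]
  rw [sum_congr rfl fun y _ => hsplit y, sum_add_distrib, sum_ite_eq, ← sum_filter,
    ← G.neighborFinset_eq_filter, sum_const, G.card_neighborFinset_eq_degree, nsmul_eq_mul]
  simp only [mem_univ, if_true]
  field_simp
  norm_num

lemma lazyStep_comm {d : ℕ} (hreg : G.IsRegularOfDegree d) (x y : V) :
    lazyStep G x y = lazyStep G y x := by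
  simp only [lazyStep, hreg x, hreg y, eq_comm (a := x), G.adj_comm x y]

lemma sum_lazyStep_left {d : ℕ} (hreg : G.IsRegularOfDegree d) (hd : 0 < d) (y : V) :
    ∑ x, lazyStep G x y = 1 := by
  simp only [lazyStep_comm hreg _ y]
  exact sum_lazyStep (hreg.degree_pos hd y)

lemma lazyProb_succ (n : ℕ) (x y : V) :
    lazyProb G (n + 1) x y = ∑ z, lazyStep G x z * lazyProb G n z y := rfl

lemma lazyProb_nonneg (n : ℕ) (x y : V) : 0 ≤ lazyProb G n x y := by
  induction n generalizing x with
  | zero => unfold lazyProb; split_ifs <;> norm_num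
  | succ n ih => exact sum_nonneg fun z _ => mul_nonneg (lazyStep_nonneg x z) (ih z)

lemma lazyProb_zero_le_one (x y : V) : lazyProb G 0 x y ≤ 1 := by
  simp only [lazyProb]; split_ifs <;> norm_num

lemma lazyProb_add (a b : ℕ) (x y : V) :
    lazyProb G (a + b) x y = ∑ z, lazyProb G a x z * lazyProb G b z y := by
  induction a generalizing x with
  | zero => simp [lazyProb]
  | succ a ih =>
    rw [Nat.add_right_comm, lazyProb_succ]
    simp only [ih, lazyProb_succ, mul_sum, sum_mul, mul_assoc]
    exact sum_comm

lemma lazyProb_one (x y : V) : lazyProb G 1 x y = lazyStep G x y := by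
  simp [lazyProb]

lemma sum_lazyProb (hdeg : ∀ x, 0 < G.degree x) (n : ℕ) (x : V) :
    ∑ y, lazyProb G n x y = 1 := by
  induction n generalizing x with
  | zero => simp [lazyProb]
  | succ n ih =>
    simp only [lazyProb_succ]
    rw [sum_comm]
    simp only [← mul_sum, ih, mul_one]
    exact sum_lazyStep (hdeg x)

lemma lazyProb_comm {d : ℕ} (hreg : G.IsRegularOfDegree d) (n : ℕ) (x y : V) :
    lazyProb G n x y = lazyProb G n y x := by
  induction n generalizing x y with
  | zero => simp only [lazyProb, eq_comm]
  | succ n ih =>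
    rw [lazyProb_succ, lazyProb_add n 1]
    simp only [lazyProb_one, ih _ y, lazyStep_comm hreg x, mul_comm]

lemma sum_lazyProb_left {d : ℕ} (hreg : G.IsRegularOfDegree d) (hd : 0 < d) (n : ℕ) (y : V) :
    ∑ x, lazyProb G n x y = 1 := by
  simp only [lazyProb_comm hreg n _ y]
  exact sum_lazyProb (hreg.degree_pos hd) n y

end Kernel

section Mixing

variable {G : SimpleGraph V} [DecidableRel G.Adj]

lemma statDist_eq_inv_card {d : ℕ} (hreg : G.IsRegularOfDegree d) (hd : 0 < d) (x : V) :
    statDist G x = (Fintype.card V : ℝ)⁻¹ := by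
  have hedges : 2 * #G.edgeFinset = Fintype.card V * d := by
    rw [← G.sum_degrees_eq_twice_card_edges, sum_congr rfl fun v _ => hreg v, sum_const,
      card_univ, smul_eq_mul]
  rw [statDist, hreg x, ← Nat.cast_ofNat, ← Nat.cast_mul, hedges]
  have : (0 : ℝ) < d := by exact_mod_cast hd
  field_simp
  push_cast
  ring

lemma lazyProb_pos_of_walk {x y : V} (p : G.Walk x y) : 0 < lazyProb G p.length x y := by
  induction p with
  | nil => simp [lazyProb]
  | @cons x z y h p ih =>
    rw [SimpleGraph.Walk.length_cons, lazyProb_succ]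
    exact lt_of_lt_of_le (mul_pos (lazyStep_pos_of_adj h) ih)
      (single_le_sum (fun u _ => mul_nonneg (lazyStep_nonneg x u) (lazyProb_nonneg _ u y))
        (mem_univ z))

lemma lazyProb_pos_of_le {t t' : ℕ} {x y : V} (h : 0 < lazyProb G t x y) (ht : t ≤ t') :
    0 < lazyProb G t' x y := by
  induction t', ht using Nat.le_induction with
  | base => exact h
  | succ t' _ ih =>
    rw [lazyProb_succ]
    refine lt_of_lt_of_le ?_ (single_le_sum (fun u _ =>
      mul_nonneg (lazyStep_nonneg x u) (lazyProb_nonneg _ u y)) (mem_univ x))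
    rw [lazyStep_self]
    positivity

lemma lazyProb_card_pos (hconn : G.Connected) (x y : V) :
    0 < lazyProb G (Fintype.card V) x y := by
  obtain ⟨p⟩ := hconn.preconnected x y
  exact lazyProb_pos_of_le (lazyProb_pos_of_walk p.toPath.1) p.toPath.2.length_lt.le

/-- Doeblin's contraction argument. -/
lemma abs_lazyProb_mul_sub_inv_card_le {d : ℕ} (hreg : G.IsRegularOfDegree d) (hd : 0 < d)
    {r : ℕ} {ε : ℝ} (hε : ∀ x y, ε ≤ lazyProb G r x y) (k : ℕ) (x y : V) :
    |lazyProb G (k * r) x y - (Fintype.card V : ℝ)⁻¹| ≤ (1 - Fintype.card V * ε) ^ k := by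
  have hdeg := hreg.degree_pos hd
  have hn : (0 : ℝ) < Fintype.card V := by exact_mod_cast Fintype.card_pos
  induction k generalizing x with
  | zero =>
    rw [zero_mul, pow_zero]
    exact abs_sub_le_of_nonneg_of_le (lazyProb_nonneg 0 x y) (lazyProb_zero_le_one x y)
      (by positivity) (inv_le_one_of_one_le₀ (by exact_mod_cast Fintype.card_pos))
  | succ k ih =>
    have hexpand : lazyProb G ((k + 1) * r) x y - (Fintype.card V : ℝ)⁻¹ =
        ∑ z, (lazyProb G r x z - ε) * (lazyProb G (k * r) z y - (Fintype.card V : ℝ)⁻¹) := by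
      simp only [sub_mul, mul_sub, sum_sub_distrib, ← sum_mul, ← mul_sum, sum_const, card_univ,
        sum_lazyProb hdeg, sum_lazyProb_left hreg hd, nsmul_eq_mul]
      rw [add_one_mul, add_comm, lazyProb_add]
      field_simp
      ring
    have hnε : Fintype.card V * ε ≤ 1 := by
      simpa [sum_lazyProb hdeg] using sum_le_sum fun y (_ : y ∈ univ) => hε x y
    calc |lazyProb G ((k + 1) * r) x y - (Fintype.card V : ℝ)⁻¹|
        ≤ ∑ z, (lazyProb G r x z - ε) * (1 - Fintype.card V * ε) ^ k := by
          rw [hexpand]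
          refine (abs_sum_le_sum_abs _ _).trans (sum_le_sum fun z _ => ?_)
          rw [abs_mul, abs_of_nonneg (sub_nonneg.2 (hε x z))]
          exact mul_le_mul_of_nonneg_left (ih z) (sub_nonneg.2 (hε x z))
      _ = (1 - Fintype.card V * ε) ^ (k + 1) := by
          rw [← sum_mul, sum_sub_distrib, sum_lazyProb hdeg, sum_const, card_univ, nsmul_eq_mul,
            pow_succ, mul_comm]

def IsMixedAt (G : SimpleGraph V) [DecidableRel G.Adj] (t : ℕ) : Prop :=
  ∀ x y : V, |lazyProb G t x y / statDist G y - 1| ≤ 1 / 4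

lemma IsMixedAt.succ (hdeg : ∀ x, 0 < G.degree x) {t : ℕ} (h : IsMixedAt G t) :
    IsMixedAt G (t + 1) := by
  intro x y
  have hexpand : lazyProb G (t + 1) x y / statDist G y - 1 =
      ∑ z, lazyStep G x z * (lazyProb G t z y / statDist G y - 1) := by
    simp only [mul_sub, sum_sub_distrib, sum_lazyStep (hdeg x), mul_one, lazyProb_succ, sum_div,
      mul_div_assoc]
  rw [hexpand]
  calc |∑ z, lazyStep G x z * (lazyProb G t z y / statDist G y - 1)|
      ≤ ∑ z, lazyStep G x z * (1 / 4) := by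
        refine (abs_sum_le_sum_abs _ _).trans (sum_le_sum fun z _ => ?_)
        rw [abs_mul, abs_of_nonneg (lazyStep_nonneg x z)]
        exact mul_le_mul_of_nonneg_left (h z y) (lazyStep_nonneg x z)
    _ = 1 / 4 := by rw [← sum_mul, sum_lazyStep (hdeg x), one_mul]

lemma IsMixedAt.mono (hdeg : ∀ x, 0 < G.degree x) {t t' : ℕ} (h : IsMixedAt G t)
    (htt' : t ≤ t') : IsMixedAt G t' := by
  induction t', htt' using Nat.le_induction with
  | base => exact h
  | succ t' _ ih => exact ih.succ hdeg

lemma IsMixedAt.lazyProb_le {t : ℕ} (h : IsMixedAt G t) (x y : V) :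
    lazyProb G t x y ≤ 5 / 4 * statDist G y := by
  have hπ : 0 ≤ statDist G y := by unfold statDist; positivity
  rcases hπ.eq_or_lt with hπ | hπ
  · have := h x y
    rw [← hπ, div_zero, zero_sub, abs_neg] at this
    norm_num at this
  · have := (abs_le.1 (h x y)).2
    rw [sub_le_iff_le_add, div_le_iff₀ hπ] at this
    linarith

lemma exists_isMixedAt (hconn : G.Connected) (hcard : 2 ≤ Fintype.card V) {d : ℕ}
    (hreg : G.IsRegularOfDegree d) : ∃ t, IsMixedAt G t := by
  have hd := hconn.pos_of_isRegularOfDegree hcard hreg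
  have hn : (0 : ℝ) < Fintype.card V := by exact_mod_cast Fintype.card_pos
  obtain ⟨p, hp⟩ := Finite.exists_min fun p : V × V => lazyProb G (Fintype.card V) p.1 p.2
  have hε : ∀ x y, lazyProb G (Fintype.card V) p.1 p.2 ≤ lazyProb G (Fintype.card V) x y :=
    fun x y => hp (x, y)
  have hεpos := lazyProb_card_pos hconn p.1 p.2
  obtain ⟨k, hk⟩ := exists_pow_lt_of_lt_one (x := (4 * Fintype.card V : ℝ)⁻¹)
    (y := 1 - Fintype.card V * lazyProb G (Fintype.card V) p.1 p.2) (by positivity)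
    (by nlinarith)
  refine ⟨k * Fintype.card V, fun x y => ?_⟩
  have hclose := (abs_lazyProb_mul_sub_inv_card_le hreg hd hε k x y).trans hk.le
  rw [statDist_eq_inv_card hreg hd, div_inv_eq_mul,
    show lazyProb G (k * Fintype.card V) x y * Fintype.card V - 1 =
      Fintype.card V * (lazyProb G (k * Fintype.card V) x y - (Fintype.card V : ℝ)⁻¹) by
      field_simp, abs_mul, abs_of_pos hn]
  calc (Fintype.card V : ℝ) * |lazyProb G (k * Fintype.card V) x y - (Fintype.card V : ℝ)⁻¹|
      ≤ Fintype.card V * (4 * Fintype.card V : ℝ)⁻¹ := by gcongr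
    _ = 1 / 4 := by field_simp

lemma isMixedAt_of_tmix_le (hconn : G.Connected) (hcard : 2 ≤ Fintype.card V) {d : ℕ}
    (hreg : G.IsRegularOfDegree d) {t : ℕ} (ht : tmix G ≤ t) : IsMixedAt G t :=
  IsMixedAt.mono (hconn.degree_pos hcard) (Nat.sInf_mem (exists_isMixedAt hconn hcard hreg)) ht

end Mixing

section Paths

variable {G : SimpleGraph V} [DecidableRel G.Adj]

def shiftPath (c : ℕ) (w : ℕ → V) : ℕ → V := fun t => w (t + c)

def snocPath (n : ℕ) (u : ℕ → V) (v : V) : ℕ → V := fun t => if t ≤ n then u t else v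

/-- `n` times the expectation of `f` along `L` steps of the walk started from the uniform
distribution. -/
noncomputable def pathSum (G : SimpleGraph V) [DecidableRel G.Adj] (L : ℕ)
    (f : (ℕ → V) → ℝ) : ℝ :=
  ∑ γ : Fin (L + 1) → V, pathWeight G L γ * f (extPath L γ)

lemma Fintype.sum_fin_snoc {α M : Type*} [Fintype α] [AddCommMonoid M] {n : ℕ}
    (f : (Fin (n + 1) → α) → M) : ∑ γ, f γ = ∑ γ : Fin n → α, ∑ v, f (Fin.snoc γ v) := by
  rw [← (Fin.snocEquiv fun _ => α).sum_comp, Fintype.sum_prod_type, sum_comm]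
  rfl

lemma Fintype.sum_fin_cons {α M : Type*} [Fintype α] [AddCommMonoid M] {n : ℕ}
    (f : (Fin (n + 1) → α) → M) : ∑ γ, f γ = ∑ x, ∑ γ : Fin n → α, f (Fin.cons x γ) := by
  rw [← (Fin.consEquiv fun _ => α).sum_comp, Fintype.sum_prod_type]
  rfl

lemma extPath_of_le {N t : ℕ} (γ : Fin (N + 1) → V) (h : t ≤ N) :
    extPath N γ t = γ ⟨t, Nat.lt_succ_of_le h⟩ := by
  simp only [extPath, min_eq_left h]

lemma extPath_of_ge {N t : ℕ} (γ : Fin (N + 1) → V) (h : N ≤ t) :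
    extPath N γ t = γ (Fin.last N) := by
  simp only [extPath, min_eq_right h, Fin.last]

lemma extPath_snoc {n : ℕ} (γ : Fin (n + 1) → V) (v : V) :
    extPath (n + 1) (Fin.snoc γ v) = snocPath n (extPath n γ) v := by
  funext t
  by_cases h : t ≤ n
  · rw [extPath_of_le _ (by omega), snocPath, if_pos h, extPath_of_le _ h]
    exact Fin.snoc_castSucc (α := fun _ => V) (i := ⟨t, by omega⟩) ..
  · rw [extPath_of_ge _ (by omega), snocPath, if_neg h, Fin.snoc_last]

lemma shiftPath_extPath_cons {n : ℕ} (x : V) (γ : Fin (n + 1) → V) :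
    shiftPath 1 (extPath (n + 1) (Fin.cons x γ)) = extPath n γ := by
  funext t
  simp only [shiftPath, extPath, Nat.add_min_add_right]
  exact Fin.cons_succ (α := fun _ => V) x γ ⟨min t n, Nat.lt_succ_of_le (min_le_right t n)⟩

lemma extPath_cons_zero {n : ℕ} (x : V) (γ : Fin (n + 1) → V) :
    extPath (n + 1) (Fin.cons x γ) 0 = x :=
  Fin.cons_zero (α := fun _ => V) ..

lemma extPath_comp_rev (L : ℕ) (γ : Fin (L + 1) → V) :
    extPath L (γ ∘ Fin.rev) = fun t => extPath L γ (L - t) := by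
  funext t
  simp only [extPath, Function.comp_apply]
  congr 1
  ext
  simp only [Fin.val_rev]
  omega

lemma pathWeight_nonneg (N : ℕ) (γ : Fin (N + 1) → V) : 0 ≤ pathWeight G N γ :=
  prod_nonneg fun _ _ => lazyStep_nonneg _ _

lemma pathWeight_snoc {n : ℕ} (γ : Fin (n + 1) → V) (v : V) :
    pathWeight G (n + 1) (Fin.snoc γ v) = pathWeight G n γ * lazyStep G (extPath n γ n) v := by
  rw [pathWeight, prod_range_succ, extPath_snoc, pathWeight]
  congr 1
  · refine prod_congr rfl fun i hi => ?_
    rw [mem_range] at hi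
    simp only [snocPath, if_pos hi.le, if_pos (Nat.succ_le_of_lt hi)]
  · simp [snocPath]

lemma pathWeight_cons {n : ℕ} (x : V) (γ : Fin (n + 1) → V) :
    pathWeight G (n + 1) (Fin.cons x γ) = lazyStep G x (extPath n γ 0) * pathWeight G n γ := by
  have hshift (t : ℕ) : extPath (n + 1) (Fin.cons x γ) (t + 1) = extPath n γ t :=
    congrFun (shiftPath_extPath_cons x γ) t
  rw [pathWeight, prod_range_succ', mul_comm, pathWeight]
  simp only [hshift]
  rw [extPath_cons_zero, ← hshift 0]

lemma pathWeight_comp_rev {d : ℕ} (hreg : G.IsRegularOfDegree d) (L : ℕ)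
    (γ : Fin (L + 1) → V) : pathWeight G L (γ ∘ Fin.rev) = pathWeight G L γ := by
  rw [pathWeight, pathWeight, extPath_comp_rev, ← prod_range_reflect]
  refine prod_congr rfl fun i hi => ?_
  rw [mem_range] at hi
  beta_reduce
  rw [lazyStep_comm hreg, show L - (L - 1 - i) = i + 1 by omega,
    show L - (L - 1 - i + 1) = i by omega]

lemma walkExp_congr {ρ : V} {N : ℕ} {f g : (ℕ → V) → ℝ}
    (h : ∀ γ : Fin (N + 1) → V, extPath N γ 0 = ρ → f (extPath N γ) = g (extPath N γ)) :
    walkExp G ρ N f = walkExp G ρ N g :=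
  sum_congr rfl fun γ _ => by
    split_ifs with hγ
    · rw [h γ hγ]
    · rfl

lemma walkExp_nonneg {ρ : V} {N : ℕ} {f : (ℕ → V) → ℝ} (hf : ∀ w, 0 ≤ f w) :
    0 ≤ walkExp G ρ N f :=
  sum_nonneg fun γ _ => by
    split_ifs
    exacts [mul_nonneg (pathWeight_nonneg N γ) (hf _), le_rfl]

lemma walkExp_const_mul (ρ : V) (N : ℕ) (c : ℝ) (f : (ℕ → V) → ℝ) :
    walkExp G ρ N (fun w => c * f w) = c * walkExp G ρ N f := by
  simp only [walkExp, mul_sum, mul_ite, mul_zero]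
  exact sum_congr rfl fun γ _ => by ring_nf

lemma walkExp_zero (ρ : V) (f : (ℕ → V) → ℝ) : walkExp G ρ 0 f = f fun _ => ρ := by
  have hconst : ∀ v, extPath 0 (uniqueElim v : Fin 1 → V) = fun _ => v := fun _ => rfl
  rw [walkExp, ← (Equiv.funUnique (Fin 1) V).symm.sum_comp]
  simp [hconst, pathWeight]

lemma walkExp_snoc (ρ : V) (n : ℕ) (f : (ℕ → V) → ℝ) :
    walkExp G ρ (n + 1) f =
      walkExp G ρ n fun u => ∑ v, lazyStep G (u n) v * f (snocPath n u v) := by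
  rw [walkExp, walkExp, Fintype.sum_fin_snoc]
  simp only [extPath_snoc, pathWeight_snoc]
  refine sum_congr rfl fun γ _ => ?_
  have h0 : ∀ v, snocPath n (extPath n γ) v 0 = extPath n γ 0 := fun v => if_pos n.zero_le
  simp only [h0]
  split_ifs
  · simp only [mul_sum, mul_assoc]
  · simp

lemma walkExp_const (hdeg : ∀ x, 0 < G.degree x) (ρ : V) (N : ℕ) (c : ℝ) :
    walkExp G ρ N (fun _ => c) = c := by
  induction N with
  | zero => rw [walkExp_zero]
  | succ N ih => simp only [walkExp_snoc, ← sum_mul, sum_lazyStep (hdeg _), one_mul, ih]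

lemma snocPath_of_le {n t : ℕ} (u : ℕ → V) (v : V) (h : t ≤ n) : snocPath n u v t = u t :=
  if_pos h

lemma shiftPath_snocPath (M b : ℕ) (u : ℕ → V) (v : V) :
    shiftPath M (snocPath (M + b) u v) = snocPath b (shiftPath M u) v := by
  funext t
  simp only [shiftPath, snocPath, show t + M ≤ M + b ↔ t ≤ b by omega]

/-- The Markov property at time `M`. -/
lemma walkExp_markov {M : ℕ} (b : ℕ) {g : (ℕ → V) → (ℕ → V) → ℝ}
    (hg : ∀ v, DependsOn (fun u => g u v) (Set.Iic M)) (ρ : V) :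
    walkExp G ρ (M + b) (fun w => g w (shiftPath M w)) =
      walkExp G ρ M fun u => walkExp G (u M) b (g u) := by
  induction b generalizing g with
  | zero =>
    refine walkExp_congr fun γ _ => ?_
    rw [walkExp_zero]
    congr 1
    funext t
    simp only [shiftPath]
    rw [extPath_of_ge (N := M + 0) γ (by omega), extPath_of_ge (N := M + 0) γ (by omega)]
  | succ b ih =>
    have hstep : ∀ u : ℕ → V, ∑ v, lazyStep G (u (M + b)) v *
          g (snocPath (M + b) u v) (shiftPath M (snocPath (M + b) u v)) =
        ∑ v, lazyStep G (shiftPath M u b) v * g u (snocPath b (shiftPath M u) v) := by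
      intro u
      refine sum_congr rfl fun v _ => ?_
      rw [shiftPath_snocPath, shiftPath, add_comm b]
      congr 1
      exact hg _ fun t ht => snocPath_of_le u v (by simp only [Set.mem_Iic] at ht; omega)
    have hg' : ∀ x, DependsOn (fun u => ∑ v, lazyStep G (x b) v * g u (snocPath b x v))
        (Set.Iic M) :=
      fun x u u' h => sum_congr rfl fun v _ => congrArg _ (hg _ h)
    rw [← add_assoc, walkExp_snoc]
    simp only [hstep]
    rw [ih hg']
    simp only [walkExp_snoc]

lemma walkExp_of_dependsOn (hdeg : ∀ x, 0 < G.degree x) {M N : ℕ} {f : (ℕ → V) → ℝ}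
    (hf : DependsOn f (Set.Iic M)) (hMN : M ≤ N) (ρ : V) :
    walkExp G ρ N f = walkExp G ρ M f := by
  obtain ⟨b, rfl⟩ := Nat.exists_eq_add_of_le hMN
  simpa only [walkExp_const hdeg] using walkExp_markov (G := G) b (g := fun u _ => f u)
    (fun _ => hf) ρ

lemma walkExp_comp_eval (k : ℕ) (ρ : V) (h : V → ℝ) :
    walkExp G ρ k (fun w => h (w k)) = ∑ z, lazyProb G k ρ z * h z := by
  induction k generalizing h with
  | zero =>
    rw [walkExp_zero]
    simp [lazyProb]
  | succ k ih =>
    have hlast : ∀ u : ℕ → V, ∀ v, snocPath k u v (k + 1) = v := fun u v => if_neg (by omega)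
    simp only [walkExp_snoc, hlast]
    rw [ih fun y => ∑ v, lazyStep G y v * h v]
    simp only [lazyProb_add (G := G) k 1, lazyProb_one, mul_sum, sum_mul, mul_assoc]
    exact sum_comm

lemma pathSum_eq_sum_walkExp (L : ℕ) (f : (ℕ → V) → ℝ) :
    pathSum G L f = ∑ ρ, walkExp G ρ L f := by
  simp only [pathSum, walkExp]
  rw [sum_comm]
  exact sum_congr rfl fun γ _ => by rw [sum_ite_eq]; simp

lemma walkExpStat_eq_inv_card_mul_pathSum {d : ℕ} (hreg : G.IsRegularOfDegree d) (hd : 0 < d)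
    (N : ℕ) (f : (ℕ → V) → ℝ) :
    walkExpStat G N f = (Fintype.card V : ℝ)⁻¹ * pathSum G N f := by
  simp only [walkExpStat, pathSum, statDist_eq_inv_card hreg hd, mul_sum, mul_assoc]

lemma pathSum_mono {L : ℕ} {f g : (ℕ → V) → ℝ} (h : ∀ w, f w ≤ g w) :
    pathSum G L f ≤ pathSum G L g :=
  sum_le_sum fun γ _ => mul_le_mul_of_nonneg_left (h _) (pathWeight_nonneg L γ)

lemma pathSum_add (L : ℕ) (f g : (ℕ → V) → ℝ) :
    pathSum G L (fun w => f w + g w) = pathSum G L f + pathSum G L g := by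
  simp only [pathSum, mul_add, sum_add_distrib]

lemma pathSum_sum {ι : Type*} (L : ℕ) (S : Finset ι) (f : ι → (ℕ → V) → ℝ) :
    pathSum G L (fun w => ∑ i ∈ S, f i w) = ∑ i ∈ S, pathSum G L (f i) := by
  simp only [pathSum, mul_sum]
  exact sum_comm

lemma pathSum_const (hdeg : ∀ x, 0 < G.degree x) (L : ℕ) (c : ℝ) :
    pathSum G L (fun _ => c) = Fintype.card V * c := by
  simp [pathSum_eq_sum_walkExp, walkExp_const hdeg]

lemma pathSum_of_dependsOn (hdeg : ∀ x, 0 < G.degree x) {M N : ℕ} {f : (ℕ → V) → ℝ}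
    (hf : DependsOn f (Set.Iic M)) (hMN : M ≤ N) : pathSum G N f = pathSum G M f := by
  simp only [pathSum_eq_sum_walkExp, walkExp_of_dependsOn hdeg hf hMN]

/-- Stationarity of the uniform distribution. -/
lemma pathSum_shiftPath {d : ℕ} (hreg : G.IsRegularOfDegree d) (hd : 0 < d) (c L : ℕ)
    (f : (ℕ → V) → ℝ) : pathSum G (c + L) (fun w => f (shiftPath c w)) = pathSum G L f := by
  induction c generalizing f with
  | zero => rw [zero_add]; rfl
  | succ c ih =>
    rw [Nat.add_right_comm, ← ih]
    rw [pathSum, pathSum, Fintype.sum_fin_cons, sum_comm]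
    simp only [pathWeight_cons]
    refine sum_congr rfl fun γ _ => ?_
    have hshift : ∀ x, shiftPath (c + 1) (extPath (c + L + 1) (Fin.cons x γ)) =
        shiftPath c (extPath (c + L) γ) := fun x => by
      rw [← shiftPath_extPath_cons x γ]; rfl
    simp only [hshift, mul_assoc, ← sum_mul, sum_lazyStep_left hreg hd, one_mul]

lemma pathSum_shiftPath_of_dependsOn {d : ℕ} (hreg : G.IsRegularOfDegree d) (hd : 0 < d)
    {c M L : ℕ} {f : (ℕ → V) → ℝ} (hf : DependsOn f (Set.Iic M)) (hL : c + M ≤ L) :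
    pathSum G L (fun w => f (shiftPath c w)) = pathSum G M f := by
  have hfc : DependsOn (fun w => f (shiftPath c w)) (Set.Iic (c + M)) :=
    fun u u' h => hf fun t ht => h (t + c) (by simp only [Set.mem_Iic] at ht ⊢; omega)
  rw [pathSum_of_dependsOn (hreg.degree_pos hd) hfc hL, pathSum_shiftPath hreg hd]

/-- Reversibility of the walk on a regular graph. -/
lemma pathSum_reverse {d : ℕ} (hreg : G.IsRegularOfDegree d) (L : ℕ) (f : (ℕ → V) → ℝ) :
    pathSum G L f = pathSum G L (fun w => f fun t => w (L - t)) := by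
  have hinv : Function.Involutive fun γ : Fin (L + 1) → V => γ ∘ Fin.rev :=
    fun γ => by funext i; simp
  rw [pathSum, ← Equiv.sum_comp (hinv.toPerm _), pathSum]
  refine sum_congr rfl fun γ _ => ?_
  simp only [Function.Involutive.coe_toPerm, pathWeight_comp_rev hreg, extPath_comp_rev]

end Paths

section Loops

variable {G : SimpleGraph V} [DecidableRel G.Adj]

lemma walkRange_shiftPath (c a b : ℕ) (w : ℕ → V) :
    walkRange (shiftPath c w) (Icc a b) = walkRange w (Icc (a + c) (b + c)) := by
  rw [walkRange, walkRange, ← image_add_right_Icc, image_image]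
  rfl

lemma walkRange_congr {A : Finset ℕ} {w w' : ℕ → V} (h : ∀ t ∈ A, w t = w' t) :
    walkRange w A = walkRange w' A :=
  image_congr h

lemma walkRange_reverse (s : ℕ) (u : ℕ → V) :
    walkRange (fun t => u (s - t)) (Icc 0 s) = walkRange u (Icc 0 s) := by
  ext v
  simp only [walkRange, mem_image, mem_Icc]
  constructor <;> rintro ⟨t, ⟨-, ht⟩, rfl⟩
  · exact ⟨s - t, ⟨Nat.zero_le _, by omega⟩, rfl⟩
  · exact ⟨s - t, ⟨Nat.zero_le _, by omega⟩, by simp only [Nat.sub_sub_self ht]⟩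

noncomputable def avoidIndicator (s : ℕ) (u v : ℕ → V) : ℝ :=
  if walkRange u (Icc 0 s) ∩ walkRange v (Icc 1 s) = ∅ then 1 else 0

lemma avoidIndicator_congr {s : ℕ} {u u' : ℕ → V} (h : ∀ t ≤ s, u t = u' t) :
    avoidIndicator s u = avoidIndicator s u' := by
  funext v
  rw [avoidIndicator, avoidIndicator, walkRange_congr fun t ht => h t (mem_Icc.1 ht).2]

noncomputable def nonIntersectProb (G : SimpleGraph V) [DecidableRel G.Adj] (s : ℕ) (x : V) :
    ℝ :=
  walkExp G x s fun u => walkExp G x s (avoidIndicator s u)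

lemma nonIntersectProb_nonneg (s : ℕ) (x : V) : 0 ≤ nonIntersectProb G s x :=
  walkExp_nonneg fun _ => walkExp_nonneg fun _ => by
    unfold avoidIndicator; split_ifs <;> norm_num

def IsSeparatedLoop (s k : ℕ) (w : ℕ → V) : Prop :=
  w s = w (s + k) ∧ walkRange w (Icc 0 s) ∩ walkRange w (Icc (s + k + 1) (s + k + s)) = ∅

instance (s k : ℕ) (w : ℕ → V) : Decidable (IsSeparatedLoop s k w) :=
  inferInstanceAs (Decidable (_ ∧ _))

lemma dependsOn_separatedLoop (s k : ℕ) :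
    DependsOn (fun w : ℕ → V => if IsSeparatedLoop s k w then (1 : ℝ) else 0)
      (Set.Iic (2 * s + k)) := by
  intro u u' h
  simp only [Set.mem_Iic] at h
  have hrange : ∀ {a b}, b ≤ 2 * s + k → walkRange u (Icc a b) = walkRange u' (Icc a b) :=
    fun hb => walkRange_congr fun t ht => h t ((mem_Icc.1 ht).2.trans hb)
  refine if_congr ?_ rfl rfl
  simp only [IsSeparatedLoop, h s (by omega), h (s + k) (by omega), hrange (by omega : s ≤ _),
    hrange (by omega : s + k + s ≤ _)]

lemma dependsOn_return (k : ℕ) :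
    DependsOn (fun w : ℕ → V => if w 0 = w k then (1 : ℝ) else 0) (Set.Iic k) := by
  intro u u' h
  simp only [Set.mem_Iic] at h
  simp only [h 0 k.zero_le, h k le_rfl]

lemma walkExp_separatedLoop (s k : ℕ) (ρ : V) :
    walkExp G ρ (2 * s + k) (fun w => if IsSeparatedLoop s k w then 1 else 0) =
      walkExp G ρ s fun u => lazyProb G k (u s) (u s) * walkExp G (u s) s (avoidIndicator s u) := by
  have hloop : ∀ w : ℕ → V, (if IsSeparatedLoop s k w then (1 : ℝ) else 0) =
      (if w s = w (s + k) then 1 else 0) * avoidIndicator s w (shiftPath (s + k) w) := by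
    intro w
    rw [avoidIndicator, walkRange_shiftPath, ite_zero_mul_ite_zero, mul_one, add_comm 1,
      add_comm s (s + k)]
    rfl
  rw [show 2 * s + k = s + k + s by ring]
  simp only [hloop]
  rw [walkExp_markov s (g := fun u v => (if u s = u (s + k) then 1 else 0) * avoidIndicator s u v)
    fun v u u' h => by
      simp only [Set.mem_Iic] at h
      beta_reduce
      rw [h s (by omega), h (s + k) le_rfl, avoidIndicator_congr fun t ht => h t (by omega)]]
  simp only [walkExp_const_mul]
  have hend : ∀ u : ℕ → V, u (s + k) = shiftPath s u k := fun u => by rw [shiftPath, add_comm]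
  simp only [hend]
  rw [walkExp_markov k (g := fun u v =>
      (if u s = v k then 1 else 0) * walkExp G (v k) s (avoidIndicator s u)) fun v u u' h => by
      simp only [Set.mem_Iic] at h
      beta_reduce
      rw [h s le_rfl, avoidIndicator_congr h]]
  congr 1
  funext u
  rw [walkExp_comp_eval k (u s) fun z =>
    (if u s = z then (1 : ℝ) else 0) * walkExp G z s (avoidIndicator s u)]
  simp only [ite_mul, one_mul, zero_mul, mul_ite, mul_zero, sum_ite_eq, mem_univ, if_true]

lemma pathSum_separatedLoop {d : ℕ} (hreg : G.IsRegularOfDegree d) (s k : ℕ) :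
    pathSum G (2 * s + k) (fun w => if IsSeparatedLoop s k w then 1 else 0) =
      ∑ x, lazyProb G k x x * nonIntersectProb G s x := by
  rw [pathSum_eq_sum_walkExp]
  simp only [walkExp_separatedLoop]
  rw [← pathSum_eq_sum_walkExp, pathSum_reverse hreg, pathSum_eq_sum_walkExp]
  refine sum_congr rfl fun ρ _ => ?_
  rw [nonIntersectProb, ← walkExp_const_mul]
  refine walkExp_congr fun γ hγ => ?_
  have hrev : avoidIndicator s (fun t => extPath s γ (s - t)) = avoidIndicator s (extPath s γ) := by
    funext v
    rw [avoidIndicator, avoidIndicator, walkRange_reverse]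
  simp only [Nat.sub_self, hγ, hrev]

lemma pathSum_return (k : ℕ) :
    pathSum G k (fun w => if w 0 = w k then 1 else 0) = ∑ x, lazyProb G k x x := by
  rw [pathSum_eq_sum_walkExp]
  refine sum_congr rfl fun ρ _ => ?_
  rw [walkExp_congr (g := fun w => if ρ = w k then 1 else 0) fun γ hγ => by rw [hγ],
    walkExp_comp_eval k ρ fun z => if ρ = z then 1 else 0]
  simp

/-- Take the largest `j ≤ s` such that `w (3s - i) = w (3s + j)` for some `i ≤ s`. If that loop is
not separated, a common point of its past and its future is a loop which either has a larger
such `j`, which is impossible, or has length more than `s`. -/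
lemma exists_separatedLoop_or_long_loop (s : ℕ) (w : ℕ → V) :
    (∃ i ≤ s, ∃ j ≤ s, IsSeparatedLoop s (i + j) (shiftPath (2 * s - i) w)) ∨
      ∃ i ≤ 2 * s, ∃ j ≤ 2 * s, s < i + j ∧ w (3 * s - i) = w (3 * s + j) := by
  classical
  let P : ℕ → Prop := fun j => ∃ i ≤ s, w (3 * s - i) = w (3 * s + j)
  obtain ⟨i₀, hi₀, hloop⟩ : P (Nat.findGreatest P s) :=
    Nat.findGreatest_spec (Nat.zero_le s) ⟨0, Nat.zero_le s, rfl⟩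
  set j₀ := Nat.findGreatest P s
  have hj₀ : j₀ ≤ s := Nat.findGreatest_le s
  by_cases hsep : IsSeparatedLoop s (i₀ + j₀) (shiftPath (2 * s - i₀) w)
  · exact Or.inl ⟨i₀, hi₀, j₀, hj₀, hsep⟩
  right
  have hloop' : shiftPath (2 * s - i₀) w s = shiftPath (2 * s - i₀) w (s + (i₀ + j₀)) := by
    simp only [shiftPath, show s + (2 * s - i₀) = 3 * s - i₀ by omega,
      show s + (i₀ + j₀) + (2 * s - i₀) = 3 * s + j₀ by omega, hloop]
  obtain ⟨v, hv⟩ := nonempty_iff_ne_empty.2 fun h => hsep ⟨hloop', h⟩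
  rw [mem_inter, walkRange_shiftPath, walkRange_shiftPath] at hv
  simp only [walkRange, mem_image, mem_Icc] at hv
  obtain ⟨⟨t₁, ht₁, rfl⟩, ⟨t₂, ht₂, hmeet⟩⟩ := hv
  have hmeet' : w (3 * s - (3 * s - t₁)) = w (3 * s + (t₂ - 3 * s)) := by
    rw [show 3 * s - (3 * s - t₁) = t₁ by omega, show 3 * s + (t₂ - 3 * s) = t₂ by omega, hmeet]
  refine ⟨3 * s - t₁, by omega, t₂ - 3 * s, by omega, ?_, hmeet'⟩
  by_contra! hshort
  exact Nat.findGreatest_is_greatest (show j₀ < t₂ - 3 * s by omega) (by omega)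
    ⟨3 * s - t₁, by omega, hmeet'⟩

def longPairs (s : ℕ) : Finset (ℕ × ℕ) :=
  (range (2 * s + 1) ×ˢ range (2 * s + 1)).filter fun p => s < p.1 + p.2

lemma card_longPairs_le (s : ℕ) : #(longPairs s) ≤ 8 * s ^ 2 := by
  have hsub : longPairs s ⊆ (range (2 * s + 1) ×ˢ range (2 * s + 1)).erase (0, 0) :=
    fun p hp => by
      rw [longPairs, mem_filter] at hp
      exact mem_erase.2 ⟨by rintro rfl; simp at hp, hp.1⟩
  refine (card_le_card hsub).trans ?_
  rw [card_erase_of_mem (by simp), card_product, card_range,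
    Nat.sub_eq_of_eq_add (show (2 * s + 1) * (2 * s + 1) = 4 * s ^ 2 + 4 * s + 1 by ring)]
  rcases s.eq_zero_or_pos with rfl | hs
  · simp
  · nlinarith

lemma one_le_sum_separatedLoop_add_sum_return (s : ℕ) (w : ℕ → V) :
    1 ≤ ∑ p ∈ range (s + 1) ×ˢ range (s + 1),
          (if IsSeparatedLoop s (p.1 + p.2) (shiftPath (2 * s - p.1) w) then (1 : ℝ) else 0) +
        ∑ p ∈ longPairs s, (if shiftPath (3 * s - p.1) w 0 =
          shiftPath (3 * s - p.1) w (p.1 + p.2) then (1 : ℝ) else 0) := by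
  rw [sum_boole, sum_boole]
  norm_cast
  rcases exists_separatedLoop_or_long_loop s w with ⟨i, hi, j, hj, hsep⟩ | ⟨i, hi, j, hj, hij, hw⟩
  · have : (i, j) ∈ (range (s + 1) ×ˢ range (s + 1)).filter
        fun p => IsSeparatedLoop s (p.1 + p.2) (shiftPath (2 * s - p.1) w) := by
      simp only [mem_filter, mem_product, mem_range]
      exact ⟨⟨by omega, by omega⟩, hsep⟩
    have := card_pos.2 ⟨_, this⟩
    omega
  · have : (i, j) ∈ (longPairs s).filter
        fun p => shiftPath (3 * s - p.1) w 0 = shiftPath (3 * s - p.1) w (p.1 + p.2) := by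
      rw [mem_filter, longPairs, mem_filter, mem_product, mem_range, mem_range]
      refine ⟨⟨⟨by omega, by omega⟩, hij⟩, ?_⟩
      simp only [shiftPath]
      rwa [zero_add, show i + j + (3 * s - i) = 3 * s + j by omega]
    have := card_pos.2 ⟨_, this⟩
    omega

end Loops

section LowerBound

variable {G : SimpleGraph V} [DecidableRel G.Adj]

lemma one_le_HW (x : V) (s : ℕ) : 1 ≤ HW G x s := by
  have hnonneg : ∀ i j, 0 ≤ lazyProb G (i + j) x x := fun _ _ => lazyProb_nonneg _ x x
  calc (1 : ℝ) = lazyProb G (0 + 0) x x := by simp [lazyProb]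
    _ ≤ ∑ j ∈ range (s + 1), lazyProb G (0 + j) x x :=
        single_le_sum (fun j _ => hnonneg 0 j) (mem_range.2 s.succ_pos)
    _ ≤ HW G x s :=
        single_le_sum (f := fun i => ∑ j ∈ range (s + 1), lazyProb G (i + j) x x)
          (fun i _ => sum_nonneg fun j _ => hnonneg i j) (mem_range.2 s.succ_pos)

lemma HW_le_iSup (s : ℕ) (x : V) : HW G x s ≤ ⨆ ρ, HW G ρ s :=
  le_ciSup (f := fun ρ => HW G ρ s) (Set.finite_range _).bddAbove x

lemma sum_pathSum_separatedLoop_le {d : ℕ} (hreg : G.IsRegularOfDegree d) (hd : 0 < d) (s : ℕ) :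
    ∑ p ∈ range (s + 1) ×ˢ range (s + 1), pathSum G (6 * s)
        (fun w => if IsSeparatedLoop s (p.1 + p.2) (shiftPath (2 * s - p.1) w) then 1 else 0) ≤
      (⨆ ρ, HW G ρ s) * pathSum G (2 * s) (fun w => if IsSeparatedLoop s 0 w then 1 else 0) := by
  have hloop0 := pathSum_separatedLoop hreg s 0
  rw [add_zero] at hloop0
  calc _ = ∑ p ∈ range (s + 1) ×ˢ range (s + 1),
          ∑ x, lazyProb G (p.1 + p.2) x x * nonIntersectProb G s x := by
        refine sum_congr rfl fun p hp => ?_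
        rw [mem_product, mem_range, mem_range] at hp
        rw [pathSum_shiftPath_of_dependsOn hreg hd (dependsOn_separatedLoop s _) (by omega),
          pathSum_separatedLoop hreg]
    _ = ∑ x, HW G x s * nonIntersectProb G s x := by
        rw [sum_comm]
        simp only [HW, sum_product, sum_mul]
    _ ≤ ∑ x, (⨆ ρ, HW G ρ s) * nonIntersectProb G s x :=
        sum_le_sum fun x _ =>
          mul_le_mul_of_nonneg_right (HW_le_iSup s x) (nonIntersectProb_nonneg s x)
    _ = _ := by simp [hloop0, mul_sum, lazyProb]

lemma sum_pathSum_long_return_le (hconn : G.Connected) (hcard : 2 ≤ Fintype.card V) {d : ℕ}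
    (hreg : G.IsRegularOfDegree d) {s : ℕ} (hs : tmix G + 1 ≤ s) :
    ∑ p ∈ longPairs s, pathSum G (6 * s) (fun w =>
        if shiftPath (3 * s - p.1) w 0 = shiftPath (3 * s - p.1) w (p.1 + p.2) then 1 else 0) ≤
      10 * s ^ 2 := by
  have hd := hconn.pos_of_isRegularOfDegree hcard hreg
  have hterm : ∀ p ∈ longPairs s, pathSum G (6 * s) (fun w =>
      if shiftPath (3 * s - p.1) w 0 = shiftPath (3 * s - p.1) w (p.1 + p.2) then 1 else 0) ≤
      5 / 4 := by
    intro p hp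
    rw [longPairs, mem_filter, mem_product, mem_range, mem_range] at hp
    rw [pathSum_shiftPath_of_dependsOn hreg hd (dependsOn_return _) (by omega), pathSum_return]
    have hmix := isMixedAt_of_tmix_le hconn hcard hreg (show tmix G ≤ p.1 + p.2 by omega)
    calc ∑ x, lazyProb G (p.1 + p.2) x x ≤ ∑ x : V, 5 / 4 * (Fintype.card V : ℝ)⁻¹ :=
          sum_le_sum fun x _ => statDist_eq_inv_card hreg hd x ▸ hmix.lazyProb_le x x
      _ = 5 / 4 := by simp only [sum_const, card_univ, nsmul_eq_mul]; field_simp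
  calc _ ≤ ∑ _p ∈ longPairs s, (5 / 4 : ℝ) := sum_le_sum hterm
    _ = #(longPairs s) * (5 / 4) := by rw [sum_const, nsmul_eq_mul]
    _ ≤ 8 * s ^ 2 * (5 / 4) := by gcongr; exact_mod_cast card_longPairs_le s
    _ = 10 * s ^ 2 := by ring

lemma one_sub_le_iSup_HW_mul_walkExpStat (hconn : G.Connected) (hcard : 2 ≤ Fintype.card V)
    {d : ℕ} (hreg : G.IsRegularOfDegree d) {s : ℕ} (hs : tmix G + 1 ≤ s) :
    1 - 10 * (s : ℝ) ^ 2 / Fintype.card V ≤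
      (⨆ ρ, HW G ρ s) * walkExpStat G (2 * s) (fun w => if IsSeparatedLoop s 0 w then 1 else 0) := by
  have hd := hconn.pos_of_isRegularOfDegree hcard hreg
  have hn : (0 : ℝ) < Fintype.card V := by exact_mod_cast Fintype.card_pos
  have hcover : (Fintype.card V : ℝ) ≤
      (⨆ ρ, HW G ρ s) * pathSum G (2 * s) (fun w => if IsSeparatedLoop s 0 w then 1 else 0) +
        10 * s ^ 2 :=
    calc (Fintype.card V : ℝ) = pathSum G (6 * s) fun _ => 1 := by
          rw [pathSum_const (hreg.degree_pos hd), mul_one]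
      _ ≤ _ := pathSum_mono (one_le_sum_separatedLoop_add_sum_return s)
      _ ≤ _ := by
        rw [pathSum_add, pathSum_sum, pathSum_sum]
        exact add_le_add (sum_pathSum_separatedLoop_le hreg hd s)
          (sum_pathSum_long_return_le hconn hcard hreg hs)
  rw [walkExpStat_eq_inv_card_mul_pathSum hreg hd, mul_left_comm, ← div_eq_inv_mul,
    one_sub_div hn.ne', div_le_div_iff_of_pos_right hn]
  linarith

end LowerBound

section NonErased

variable {G : SimpleGraph V} [DecidableRel G.Adj]

lemma NEseg_subset_Icc (w : ℕ → V) (a k : ℕ) : NEseg w a k ⊆ Icc a (a + k) := by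
  induction k with
  | zero => simp [NEseg]
  | succ k ih =>
    intro m hm
    rw [NEseg, mem_union, mem_singleton] at hm
    rcases hm with hm | rfl
    · have := mem_Icc.1 (ih (mem_filter.1 hm).1)
      exact mem_Icc.2 ⟨this.1, by omega⟩
    · exact mem_Icc.2 ⟨by omega, le_rfl⟩

lemma mem_NEloc_of_separatedLoop {w : ℕ → V} {s a b m : ℕ} (hm : m ∈ Icc (a + s) (b - s))
    (hsep : IsSeparatedLoop s 0 (shiftPath (m - s) w)) : m ∈ NEloc w s a b := by
  have hms : s ≤ m := by rw [mem_Icc] at hm; omega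
  obtain ⟨-, hsep⟩ := hsep
  rw [walkRange_shiftPath, walkRange_shiftPath, zero_add, add_zero,
    Nat.add_sub_cancel' hms, show s + 1 + (m - s) = m + 1 by omega,
    show s + s + (m - s) = m + s by omega] at hsep
  refine mem_filter.2 ⟨hm, subset_empty.1 fun v hv => hsep ▸ ?_⟩
  rw [mem_inter] at hv ⊢
  refine ⟨image_subset_image ?_ hv.1, hv.2⟩
  simpa [Nat.sub_add_cancel hms] using NEseg_subset_Icc w (m - s) s

lemma sum_separatedLoop_le_card_NEloc (w : ℕ → V) (s a b : ℕ) :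
    ∑ m ∈ Icc (a + s) (b - s), (if IsSeparatedLoop s 0 (shiftPath (m - s) w) then 1 else 0 : ℝ) ≤
      #(NEloc w s a b) := by
  rw [sum_boole]
  exact_mod_cast card_le_card fun m hm =>
    mem_NEloc_of_separatedLoop (mem_filter.1 hm).1 (mem_filter.1 hm).2

lemma card_mul_walkExpStat_separatedLoop_le {d : ℕ} (hreg : G.IsRegularOfDegree d) (hd : 0 < d)
    {s a b N : ℕ} (hbN : b ≤ N) :
    #(Icc (a + s) (b - s)) * walkExpStat G (2 * s) (fun w => if IsSeparatedLoop s 0 w then 1 else 0)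
      ≤ walkExpStat G N fun w => (#(NEloc w s a b) : ℝ) := by
  rw [walkExpStat_eq_inv_card_mul_pathSum hreg hd, walkExpStat_eq_inv_card_mul_pathSum hreg hd,
    mul_left_comm]
  gcongr
  calc _ = ∑ m ∈ Icc (a + s) (b - s),
        pathSum G N (fun w => if IsSeparatedLoop s 0 (shiftPath (m - s) w) then 1 else 0) := by
        rw [← nsmul_eq_mul, ← sum_const]
        refine sum_congr rfl fun m hm => ?_
        rw [mem_Icc] at hm
        rw [pathSum_shiftPath_of_dependsOn hreg hd
          (dependsOn_separatedLoop s 0 : DependsOn _ (Set.Iic (2 * s))) (by omega)]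
        rfl
    _ ≤ _ := by
        rw [← pathSum_sum]
        exact pathSum_mono fun w => sum_separatedLoop_le_card_NEloc w s a b

lemma walkExpStat_le_of_forall_le {d : ℕ} (hreg : G.IsRegularOfDegree d) (hd : 0 < d) {N : ℕ}
    {f : (ℕ → V) → ℝ} {c : ℝ} (h : ∀ w, f w ≤ c) : walkExpStat G N f ≤ c := by
  have hn : (0 : ℝ) < Fintype.card V := by exact_mod_cast Fintype.card_pos
  rw [walkExpStat_eq_inv_card_mul_pathSum hreg hd]
  calc _ ≤ (Fintype.card V : ℝ)⁻¹ * pathSum G N (fun _ => c) := by gcongr; exact pathSum_mono h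
    _ = c := by rw [pathSum_const (hreg.degree_pos hd)]; field_simp

end NonErased

theorem expected_number_of_locally_nonerased_indices_general
    (G : SimpleGraph V) [DecidableRel G.Adj] (hconn : G.Connected)
    (hcard : 2 ≤ Fintype.card V) (d : ℕ) (hreg : G.IsRegularOfDegree d)
    (s : ℕ) (hs : tmix G + 1 ≤ s)
    (aA bA N : ℕ)
    (hAcard : 2 * s + 1 ≤ (Finset.Icc aA bA).card) (hNA : bA ≤ N) :
    (1 - 10 * (s : ℝ) ^ 2 / (Fintype.card V : ℝ)) *
        (((Finset.Icc aA bA).card : ℝ) - 2 * s) / (⨆ ρ : V, HW G ρ s) ≤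
      walkExpStat G N (fun w => ((NEloc w s aA bA).card : ℝ)) ∧
    walkExpStat G N (fun w => ((NEloc w s aA bA).card : ℝ)) ≤ ((Finset.Icc aA bA).card : ℝ) := by
  have hd := hconn.pos_of_isRegularOfDegree hcard hreg
  have hH : 0 < ⨆ ρ, HW G ρ s :=
    zero_lt_one.trans_le ((one_le_HW (Classical.arbitrary V) s).trans (HW_le_iSup s _))
  have hinner : #(Icc (aA + s) (bA - s)) + 2 * s = #(Icc aA bA) := by
    simp only [Nat.card_Icc] at hAcard ⊢
    omega
  constructor
  · have hcore := one_sub_le_iSup_HW_mul_walkExpStat hconn hcard hreg hs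
    have hcount := card_mul_walkExpStat_separatedLoop_le (s := s) (a := aA) hreg hd hNA
    rw [div_le_iff₀ hH, ← hinner, Nat.cast_add, Nat.cast_mul, Nat.cast_ofNat, add_sub_cancel_right]
    nlinarith [mul_le_mul_of_nonneg_right hcore (Nat.cast_nonneg (α := ℝ) #(Icc (aA + s) (bA - s))),
      mul_le_mul_of_nonneg_left hcount hH.le]
  · exact walkExpStat_le_of_forall_le hreg hd fun w => by
      exact_mod_cast card_le_card ((filter_subset _ _).trans (Icc_subset_Icc (by omega) (by omega)))

/-- Bounds on the expected number of `(A,s)`-locally non-erased indices. -/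
theorem expected_number_of_locally_nonerased_indices
    (G : SimpleGraph V) [DecidableRel G.Adj] (hconn : G.Connected)
    (hcard : 2 ≤ Fintype.card V) (d : ℕ) (hreg : G.IsRegularOfDegree d)
    (s : ℕ) (hs : tmix G + 1 ≤ s)
    (aA bA N : ℕ) (hA : aA ≤ bA)
    (hAcard : 2 * s + 1 ≤ (Finset.Icc aA bA).card) (hNA : bA ≤ N) :
    (1 - 10 * (s : ℝ) ^ 2 / (Fintype.card V : ℝ)) *
        (((Finset.Icc aA bA).card : ℝ) - 2 * s) / (⨆ ρ : V, HW G ρ s) ≤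
      walkExpStat G N (fun w => ((NEloc w s aA bA).card : ℝ)) ∧
    walkExpStat G N (fun w => ((NEloc w s aA bA).card : ℝ)) ≤ ((Finset.Icc aA bA).card : ℝ) :=
  expected_number_of_locally_nonerased_indices_general G hconn hcard d hreg s hs aA bA N hAcard hNA
end

section
/- For j ∈ ℕ, let Z = (Z_1,...,Z_j) and Z' = (Z'_1,...,Z'_j) be two sequences of {0,1}-valued random variables (on possibly different probability spaces). Then there exists a coupling of Z and Z' such that P(Z = Z') ≥ 1 − Σ_{i=1}^{j} Σ_{k≠i} (E[Z_k Z_i] + E[Z'_k Z'_i]) − Σ_{i=1}^{j} |E[Z_i] − E[Z'_i]|. -/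
/-!
Encode a `{0,1}`-vector by its support `s : Finset ι`, with laws `p` and `q`. The maximal coupling
puts mass `∑ s, min (p s) (q s)` on the diagonal, so it suffices to bound this overlap from below
by its terms at `s = ∅` and `s = {i}`. The union bound gives `p ∅ ≥ 1 - ∑ i, E[Zᵢ]`, and
`E[Zᵢ] - p {i}` is the mass of supports containing `i` and some `k ≠ i`, hence at most
`∑ k ≠ i, E[Zₖ Zᵢ]`. So `p {i}` and `q {i}` are both close to `E[Zᵢ]` and `E[Z'ᵢ]`, which
differ by `|E[Zᵢ] - E[Z'ᵢ]|`.
-/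

open MeasureTheory

section Coupling

open Set

lemma inv_measure_univ_smul_smul_self {α : Type*} [MeasurableSpace α] (ξ : Measure α)
    [IsFiniteMeasure ξ] : (ξ univ)⁻¹ • ξ univ • ξ = ξ := by
  rcases eq_or_ne (ξ univ) 0 with h | h
  · simp [Measure.measure_univ_eq_zero.1 h]
  · rw [smul_smul, ENNReal.inv_mul_cancel h (measure_ne_top _ _), one_smul]

variable {α : Type*} [MeasurableSpace α] [Countable α] [MeasurableSingletonClass α]

lemma sum_min_smul_dirac_add_sum_tsub_smul_dirac (μ ν : Measure α) :
    (Measure.sum fun a => min (μ {a}) (ν {a}) • Measure.dirac a) +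
      (Measure.sum fun a => (μ {a} - ν {a}) • Measure.dirac a) = μ :=
  Measure.ext_iff_singleton.2 fun a => by
    rw [Measure.add_apply, Measure.sum_smul_dirac_singleton, Measure.sum_smul_dirac_singleton,
      add_comm, tsub_add_min]

theorem exists_coupling_tsum_min_le (μ ν : Measure α) [IsProbabilityMeasure μ]
    [IsProbabilityMeasure ν] :
    ∃ m : Measure (α × α), IsProbabilityMeasure m ∧ m.map Prod.fst = μ ∧ m.map Prod.snd = ν ∧
      ∑' a, min (μ {a}) (ν {a}) ≤ m {x | x.1 = x.2} := by
  set ρ := Measure.sum fun a => min (μ {a}) (ν {a}) • Measure.dirac a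
  set μ₁ := Measure.sum fun a => (μ {a} - ν {a}) • Measure.dirac a
  set ν₁ := Measure.sum fun a => (ν {a} - μ {a}) • Measure.dirac a
  have hμ : ρ + μ₁ = μ := sum_min_smul_dirac_add_sum_tsub_smul_dirac μ ν
  have hν : ρ + ν₁ = ν := by
    simpa only [ρ, min_comm] using sum_min_smul_dirac_add_sum_tsub_smul_dirac ν μ
  have : IsFiniteMeasure ρ := isFiniteMeasure_of_le μ (hμ ▸ Measure.le_add_right le_rfl)
  have : IsFiniteMeasure μ₁ := isFiniteMeasure_of_le μ (hμ ▸ Measure.le_add_left le_rfl)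
  have : IsFiniteMeasure ν₁ := isFiniteMeasure_of_le ν (hν ▸ Measure.le_add_left le_rfl)
  have hmass : ν₁ univ = μ₁ univ := by
    have h : (ρ + ν₁) univ = (ρ + μ₁) univ := by rw [hμ, hν, measure_univ, measure_univ]
    rw [Measure.add_apply, Measure.add_apply] at h
    exact (ENNReal.add_right_inj (measure_ne_top ρ univ)).1 h
  have hdiag : Measurable fun a : α => (a, a) := measurable_id.prodMk measurable_id
  -- the overlap `ρ` sits on the diagonal, the two excesses are coupled independently
  set m := ρ.map (fun a => (a, a)) + (μ₁ univ)⁻¹ • μ₁.prod ν₁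
  have hfst : m.map Prod.fst = μ := by
    rw [Measure.map_add _ _ measurable_fst, Measure.map_smul, Measure.map_fst_prod,
      Measure.map_map measurable_fst hdiag, hmass, inv_measure_univ_smul_smul_self]
    rwa [Function.comp_def, Measure.map_id']
  have hsnd : m.map Prod.snd = ν := by
    rw [Measure.map_add _ _ measurable_snd, Measure.map_smul, Measure.map_snd_prod,
      Measure.map_map measurable_snd hdiag, ← hmass, inv_measure_univ_smul_smul_self]
    rwa [Function.comp_def, Measure.map_id']
  refine ⟨m, ⟨?_⟩, hfst, hsnd, ?_⟩
  · simpa [Measure.map_apply measurable_fst MeasurableSet.univ] using congrArg (· univ) hfst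
  · calc ∑' a, min (μ {a}) (ν {a}) = ρ ((fun a => (a, a)) ⁻¹' {x | x.1 = x.2}) := by
          simp [ρ]
      _ ≤ ρ.map (fun a => (a, a)) {x | x.1 = x.2} := Measure.le_map_apply hdiag.aemeasurable _
      _ ≤ m {x | x.1 = x.2} := (Measure.le_add_right le_rfl : ρ.map _ ≤ m) _

end Coupling

section Combinatorics

open Finset

variable {ι : Type*} [DecidableEq ι]

def indicatorVec (s : Finset ι) (i : ι) : ℝ := if i ∈ s then 1 else 0

lemma indicatorVec_injective : Function.Injective (indicatorVec : Finset ι → ι → ℝ) := by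
  intro s t h
  ext i
  have hi := congrFun h i
  by_cases hs : i ∈ s <;> by_cases ht : i ∈ t <;> simp [indicatorVec, hs, ht] at hi ⊢

lemma indicatorVec_nonneg (s : Finset ι) (i : ι) : 0 ≤ indicatorVec s i := by
  unfold indicatorVec; split_ifs <;> norm_num

variable [Fintype ι]

lemma sum_indicatorVec (s : Finset ι) : ∑ i, indicatorVec s i = #s := by
  simp [indicatorVec]

lemma indicatorVec_sub_le_sum_erase (s : Finset ι) (i : ι) :
    indicatorVec s i - (if s = {i} then 1 else 0) ≤
      ∑ k ∈ univ.erase i, indicatorVec s k * indicatorVec s i := by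
  by_cases hs : s = {i}
  · simp [hs, indicatorVec]
  by_cases hi : i ∈ s
  · obtain ⟨k, hk, hki⟩ := s.exists_mem_ne (one_lt_card_iff_nontrivial.2
      ((nontrivial_iff_ne_singleton hi).2 hs)) i
    calc indicatorVec s i - (if s = {i} then 1 else 0)
        = indicatorVec s k * indicatorVec s i := by simp [indicatorVec, hs, hi, hk]
      _ ≤ _ := single_le_sum
          (fun k _ => mul_nonneg (indicatorVec_nonneg s k) (indicatorVec_nonneg s i))
          (mem_erase.2 ⟨hki, mem_univ k⟩)
  · simp [indicatorVec, hi, hs]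

variable {p q : Finset ι → ℝ}

lemma one_sub_sum_le_apply_empty (hp : ∀ s, 0 ≤ p s) (hp1 : ∑ s, p s = 1) :
    1 - ∑ i, ∑ s, p s * indicatorVec s i ≤ p ∅ := by
  have hpoint : ∀ s, p s ≤ (if s = ∅ then p s else 0) + p s * #s := by
    intro s
    rcases s.eq_empty_or_nonempty with rfl | hs
    · simp
    · have : (1 : ℝ) ≤ #s := by exact_mod_cast hs.card_pos
      simp only [hs.ne_empty, if_false, zero_add]
      nlinarith [hp s]
  have := sum_le_sum fun s (_ : s ∈ univ) => hpoint s
  rw [hp1, sum_add_distrib, sum_ite_eq'] at this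
  rw [sum_comm]
  simp only [← mul_sum, sum_indicatorVec]
  simpa using this

lemma apply_singleton_le_sum (hp : ∀ s, 0 ≤ p s) (i : ι) :
    p {i} ≤ ∑ s, p s * indicatorVec s i := by
  have := single_le_sum (fun s _ => mul_nonneg (hp s) (indicatorVec_nonneg s i))
    (mem_univ ({i} : Finset ι)) (f := fun s => p s * indicatorVec s i)
  simpa [indicatorVec] using this

lemma sum_sub_apply_singleton_le (hp : ∀ s, 0 ≤ p s) (i : ι) :
    ∑ s, p s * indicatorVec s i - p {i} ≤
      ∑ k ∈ univ.erase i, ∑ s, p s * (indicatorVec s k * indicatorVec s i) := by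
  have h : ∑ s, p s * indicatorVec s i - p {i} =
      ∑ s, p s * (indicatorVec s i - if s = {i} then 1 else 0) := by
    simp [mul_sub, sum_sub_distrib]
  rw [h, sum_comm]
  simp only [← mul_sum]
  exact sum_le_sum fun s _ =>
    mul_le_mul_of_nonneg_left (indicatorVec_sub_le_sum_erase s i) (hp s)

lemma apply_empty_add_sum_apply_singleton_le {f : Finset ι → ℝ} (hf : ∀ s, 0 ≤ f s) :
    f ∅ + ∑ i, f {i} ≤ ∑ s, f s := by
  set singletons := (univ : Finset ι).map ⟨singleton, singleton_injective⟩
  have hnot : ∅ ∉ singletons := by simp [singletons]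
  calc f ∅ + ∑ i, f {i} = ∑ s ∈ insert ∅ singletons, f s := by
        rw [sum_insert hnot, sum_map]; rfl
    _ ≤ ∑ s, f s := sum_le_sum_of_subset_of_nonneg (subset_univ _) fun s _ _ => hf s

theorem one_sub_le_sum_min (hp : ∀ s, 0 ≤ p s) (hq : ∀ s, 0 ≤ q s)
    (hp1 : ∑ s, p s = 1) (hq1 : ∑ s, q s = 1) :
    1 - (∑ i, ∑ k ∈ univ.erase i,
          (∑ s, p s * (indicatorVec s k * indicatorVec s i) +
            ∑ s, q s * (indicatorVec s k * indicatorVec s i))) -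
        ∑ i, |∑ s, p s * indicatorVec s i - ∑ s, q s * indicatorVec s i| ≤
      ∑ s, min (p s) (q s) := by
  set A := fun i => ∑ s, p s * indicatorVec s i
  set B := fun i => ∑ s, q s * indicatorVec s i
  set E := fun i => |A i - B i| + (A i - p {i}) + (B i - q {i})
  have hE : ∑ i, E i ≤ ∑ i, ∑ k ∈ univ.erase i,
          (∑ s, p s * (indicatorVec s k * indicatorVec s i) +
            ∑ s, q s * (indicatorVec s k * indicatorVec s i)) +
        ∑ i, |A i - B i| := by
    rw [← sum_add_distrib]
    refine sum_le_sum fun i _ => ?_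
    rw [sum_add_distrib]
    linarith [sum_sub_apply_singleton_le hp i, sum_sub_apply_singleton_le hq i]
  have hsingle : ∀ i, A i - E i ≤ min (p {i}) (q {i}) ∧ B i - E i ≤ min (p {i}) (q {i}) := by
    intro i
    have ha := apply_singleton_le_sum hp i
    have hb := apply_singleton_le_sum hq i
    have h1 := le_abs_self (A i - B i)
    have h2 := neg_abs_le (A i - B i)
    refine ⟨le_min ?_ ?_, le_min ?_ ?_⟩ <;> simp only [E] <;> linarith
  have hempty : min (1 - ∑ i, A i) (1 - ∑ i, B i) ≤ min (p ∅) (q ∅) :=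
    min_le_min (one_sub_sum_le_apply_empty hp hp1) (one_sub_sum_le_apply_empty hq hq1)
  have hA := sum_le_sum fun i (_ : i ∈ univ) => (hsingle i).1
  have hB := sum_le_sum fun i (_ : i ∈ univ) => (hsingle i).2
  rw [sum_sub_distrib] at hA hB
  have hmin := apply_empty_add_sum_apply_singleton_le (f := fun s => min (p s) (q s))
    fun s => le_min (hp s) (hq s)
  have hsplit : 1 - ∑ i, E i - ∑ i, min (p {i}) (q {i}) ≤ min (1 - ∑ i, A i) (1 - ∑ i, B i) :=
    le_min (by linarith) (by linarith)
  linarith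

end Combinatorics

lemma exists_measurable_finset_of_binary {Ω ι : Type*} [MeasurableSpace Ω] [Fintype ι]
    [DecidableEq ι] {Z : Ω → ι → ℝ} (hZ : Measurable Z) (h01 : ∀ ω i, Z ω i = 0 ∨ Z ω i = 1) :
    ∃ ζ : Ω → Finset ι, Measurable ζ ∧ Z = indicatorVec ∘ ζ := by
  refine ⟨fun ω => Finset.univ.filter (Z ω · = 1), measurable_finset_iff.2 fun i => ?_, ?_⟩
  · simpa using
      measurableSet_setOfPred.1 ((measurable_pi_apply i).comp hZ (measurableSet_singleton 1))
  · ext ω i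
    rcases h01 ω i with h | h <;> simp [indicatorVec, h]

lemma integral_comp_eq_sum_measureReal {Ω α : Type*} [MeasurableSpace Ω] [MeasurableSpace α]
    [Fintype α] [MeasurableSingletonClass α] {P : Measure Ω} [IsFiniteMeasure P] {ζ : Ω → α}
    (hζ : Measurable ζ) (f : α → ℝ) :
    ∫ ω, f (ζ ω) ∂P = ∑ a, (P.map ζ).real {a} * f a := by
  rw [← integral_map hζ.aemeasurable (measurable_of_finite f).aestronglyMeasurable,
    integral_fintype Integrable.of_finite]
  rfl

/-- Coupling of two `{0,1}`-valued random vectors. -/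
theorem coupling_of_binary_vectors
    {Ω Ω' : Type*} [MeasurableSpace Ω] [MeasurableSpace Ω']
    (P : Measure Ω) (P' : Measure Ω') [IsProbabilityMeasure P] [IsProbabilityMeasure P']
    (j : ℕ) (Z : Ω → Fin j → ℝ) (Z' : Ω' → Fin j → ℝ)
    (hZ : Measurable Z) (hZ' : Measurable Z')
    (hZ01 : ∀ ω i, Z ω i = 0 ∨ Z ω i = 1) (hZ'01 : ∀ ω i, Z' ω i = 0 ∨ Z' ω i = 1) :
    ∃ (Ω'' : Type) (_ : MeasurableSpace Ω'') (P'' : Measure Ω'')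
      (X Y : Ω'' → Fin j → ℝ),
      IsProbabilityMeasure P'' ∧ Measurable X ∧ Measurable Y ∧
      P''.map X = P.map Z ∧ P''.map Y = P'.map Z' ∧
      1 - (∑ i : Fin j, ∑ k ∈ Finset.univ.erase i,
              ((∫ ω, Z ω k * Z ω i ∂P) + (∫ ω, Z' ω k * Z' ω i ∂P'))) -
          (∑ i : Fin j, |(∫ ω, Z ω i ∂P) - (∫ ω, Z' ω i ∂P')|) ≤
        (P'' {ω | X ω = Y ω}).toReal := by
  obtain ⟨ζ, hζ, rfl⟩ := exists_measurable_finset_of_binary hZ hZ01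
  obtain ⟨ζ', hζ', rfl⟩ := exists_measurable_finset_of_binary hZ' hZ'01
  have := Measure.isProbabilityMeasure_map (μ := P) hζ.aemeasurable
  have := Measure.isProbabilityMeasure_map (μ := P') hζ'.aemeasurable
  obtain ⟨m, hm, hfst, hsnd, hdiag⟩ := exists_coupling_tsum_min_le (P.map ζ) (P'.map ζ')
  have hv : Measurable (indicatorVec : Finset (Fin j) → Fin j → ℝ) := measurable_of_finite _
  refine ⟨_, _, m, indicatorVec ∘ Prod.fst, indicatorVec ∘ Prod.snd, hm,
    hv.comp measurable_fst, hv.comp measurable_snd, ?_, ?_, ?_⟩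
  · rw [← Measure.map_map hv measurable_fst, hfst, Measure.map_map hv hζ]
  · rw [← Measure.map_map hv measurable_snd, hsnd, Measure.map_map hv hζ']
  have hset : {x | (indicatorVec ∘ Prod.fst) x = (indicatorVec ∘ Prod.snd) x} =
      {x : Finset (Fin j) × Finset (Fin j) | x.1 = x.2} :=
    Set.ext fun x => indicatorVec_injective.eq_iff
  calc _ ≤ ∑ s, min ((P.map ζ).real {s}) ((P'.map ζ').real {s}) := by
        simpa only [Function.comp_apply, ← integral_comp_eq_sum_measureReal hζ,
          ← integral_comp_eq_sum_measureReal hζ'] using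
          one_sub_le_sum_min (p := fun s => (P.map ζ).real {s})
            (q := fun s => (P'.map ζ').real {s}) (fun _ => measureReal_nonneg)
            (fun _ => measureReal_nonneg) (by simp) (by simp)
    _ = (∑' s, min ((P.map ζ) {s}) ((P'.map ζ') {s})).toReal := by
        rw [tsum_fintype, ENNReal.toReal_sum fun s _ => (min_le_left _ _).trans_lt
          (measure_lt_top _ _) |>.ne]
        simp [measureReal_def, ENNReal.toReal_min]
    _ ≤ _ := by rw [hset]; exact ENNReal.toReal_mono (measure_ne_top m _) hdiag
end
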